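/- arXiv:2201.11603 — 2 statements merged into one kernel-verified Lean document; each statement's English description precedes it below -/
import Mathlib

section
/- The Laplace mechanism is (ε, 0)-differentially private: if f is a real-valued function on datasets with sensitivity at most Δ (i.e., |f(D) − f(D')| ≤ Δ whenever D ~ D'), then the mechanism M(D) = f(D) + Z, where Z is a Laplace random variable with scale Δ/ε, satisfies (ε, 0)-differential privacy. -/
open MeasureTheory

/-- The Laplace distribution with scale `b`, given by density
`(1/(2b)) * exp (-|x|/b)` with respect to Lebesgue measure. -/
noncomputable def laplace (b : ℝ) : Measure ℝ :=
  volume.withDensity (fun x => ENNReal.ofReal ((1 / (2 * b)) * Real.exp (-|x| / b)))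

open Real

/-! By the triangle inequality, the density of `a + Laplace(b)` is pointwise at most
`exp (|a - a'| / b)` times that of `a' + Laplace(b)`, and integrating over `S` preserves the
bound. With `b = Δ / ε` and `|a - a'| ≤ Δ` the factor is at most `exp ε`. -/

theorem MeasureTheory.Measure.map_const_add_withDensity {G : Type*} [MeasurableSpace G] [AddCommGroup G]
    [MeasurableAdd G] (μ : Measure G) [μ.IsAddLeftInvariant] (c : G) (g : G → ENNReal) :
    (μ.withDensity g).map (c + ·) = μ.withDensity (fun x => g (x - c)) := by
  ext s hs
  rw [Measure.map_apply (measurable_const_add c) hs,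
    withDensity_apply _ (hs.preimage (measurable_const_add c)), withDensity_apply _ hs,
    ← (measurePreserving_add_left μ c).setLIntegral_comp_preimage_emb
      (measurableEmbedding_addLeft c) (fun y => g (y - c))]
  simp only [add_sub_cancel_left]

theorem laplace_map_const_add (b c : ℝ) :
    (laplace b).map (c + ·)
      = volume.withDensity (fun x => ENNReal.ofReal (1 / (2 * b) * exp (-|x - c| / b))) :=
  Measure.map_const_add_withDensity volume c _

theorem exp_neg_abs_sub_div_le {b : ℝ} (hb : 0 ≤ b) (x a a' : ℝ) :
    exp (-|x - a| / b) ≤ exp (|a - a'| / b) * exp (-|x - a'| / b) := by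
  rw [← exp_add, ← add_div]
  gcongr
  linarith [abs_sub_le x a a']

theorem laplace_map_const_add_le {b : ℝ} (hb : 0 < b) (a a' : ℝ) :
    (laplace b).map (a + ·)
      ≤ ENNReal.ofReal (exp (|a - a'| / b)) • (laplace b).map (a' + ·) := by
  rw [laplace_map_const_add, laplace_map_const_add, ← withDensity_smul' _ _ ENNReal.ofReal_ne_top]
  refine withDensity_mono (Filter.Eventually.of_forall fun x => ?_)
  dsimp only [Pi.smul_apply, smul_eq_mul]
  rw [← ENNReal.ofReal_mul (exp_nonneg _), mul_left_comm]
  gcongr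
  exact exp_neg_abs_sub_div_le hb.le x a a'

theorem laplace_mechanism_dp
    {D : Type*} (nb : D → D → Prop) (f : D → ℝ)
    (Δ ε : ℝ) (hΔ : 0 < Δ) (hε : 0 < ε)
    (hsens : ∀ d d', nb d d' → |f d - f d'| ≤ Δ) :
    ∀ d d', nb d d' → ∀ S : Set ℝ, MeasurableSet S →
      (laplace (Δ / ε)).map (fun z => f d + z) S
        ≤ ENNReal.ofReal (Real.exp ε) * (laplace (Δ / ε)).map (fun z => f d' + z) S := by
  intro d d' hdd S _
  have hb : 0 < Δ / ε := div_pos hΔ hε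
  have hratio : |f d - f d'| / (Δ / ε) ≤ ε := by
    rw [div_le_iff₀ hb, mul_div_cancel₀ _ hε.ne']
    exact hsens d d' hdd
  calc (laplace (Δ / ε)).map (fun z => f d + z) S
      ≤ ENNReal.ofReal (exp (|f d - f d'| / (Δ / ε))) * (laplace (Δ / ε)).map (f d' + ·) S :=
        laplace_map_const_add_le hb (f d) (f d') S
    _ ≤ ENNReal.ofReal (exp ε) * (laplace (Δ / ε)).map (fun z => f d' + z) S := by
        gcongr
end

section
/- Key selection output stability: with each user contributing to at most L keys, the function mapping a dataset to its vector of per-key distinct-user counts, restricted to keys with nonzero count, changes as follows between user-level neighbors D ~ D': the set of keys with nonzero count in exactly one of D, D' has size at most L. Consequently, a key-selection mechanism that applies an (ε₀, δ₀)-DP retain/drop decision independently to each key's count (and always drops keys with zero count, where the per-key decision satisfies the (ε₀,δ₀) inequality also between counts 0 and 1 with the zero-count side forced to drop) is (L·ε₀, L·δ₀)-differentially private as a mechanism outputting the retained key set. -/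
open MeasureTheory Finset
open scoped ENNReal

/-!
Adding a user `u` changes only the counts of the keys in `f u`, each by one. Hence the product
distribution of the per-key decisions on `D` differs from the one on `insert u D` in at most `L`
coordinates, in each of which it is `(ε₀, δ₀)`-close. Basic composition for product measures then
gives `(L ε₀, L δ₀)`: integrate out one coordinate at a time, bounding the remaining integral by a
test function with values in `[0, 1]`, to which the one-coordinate inequality applies by the layer
cake formula.
-/

/-- The distinct-user count for key `k`: the number of present users whose key set
contains `k`, where `f u` is user `u`'s key set. -/
def keyCount {U κ : Type*} [DecidableEq κ] (f : U → Finset κ) (E : Finset U) (k : κ) : ℕ :=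
  (E.filter (fun v => k ∈ f v)).card

namespace MeasureTheory

variable {α : Type*} [MeasurableSpace α]

/-- In differential-privacy terms, `μ` is `(ε, δ)`-indistinguishable from `ν` with `c = exp ε`. -/
def DPDominated (c d : ℝ≥0∞) (μ ν : Measure α) : Prop :=
  ∀ s, MeasurableSet s → μ s ≤ c * ν s + d

/-- Layer cake: `∫⁻ f ∂μ = ∫₀¹ μ {f > t} dt`, and each superlevel set obeys the set inequality. -/
theorem DPDominated.lintegral_le {c d : ℝ≥0∞} {μ ν : Measure α} (h : DPDominated c d μ ν)
    {f : α → ℝ≥0∞} (hf : Measurable f) (hf1 : ∀ x, f x ≤ 1) :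
    ∫⁻ x, f x ∂μ ≤ c * ∫⁻ x, f x ∂ν + d := by
  set g : α → ℝ := fun x => (f x).toReal
  have hg : Measurable g := hf.ennreal_toReal
  have hg1 : ∀ x, g x ≤ 1 := fun x =>
    ENNReal.toReal_le_of_le_ofReal zero_le_one (by simpa using hf1 x)
  have layer (m : Measure α) : ∫⁻ x, f x ∂m = ∫⁻ t in Set.Ioi 0, m {x | t < g x} := by
    rw [← lintegral_eq_lintegral_meas_lt m
      (Filter.Eventually.of_forall fun x => ENNReal.toReal_nonneg) hg.aemeasurable]
    exact lintegral_congr fun x =>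
      (ENNReal.ofReal_toReal (ne_top_of_le_ne_top ENNReal.one_ne_top (hf1 x))).symm
  have hsuper : ∀ t,
      μ {x | t < g x} ≤ c * ν {x | t < g x} + (Set.Iio 1).indicator (fun _ => d) t := by
    intro t
    by_cases ht : t < 1
    · rw [Set.indicator_of_mem (Set.mem_Iio.mpr ht)]
      exact h _ (measurableSet_lt measurable_const hg)
    · have : {x | t < g x} = ∅ :=
        Set.eq_empty_of_forall_notMem fun x hx => ht (lt_of_lt_of_le hx (hg1 x))
      simp [this]
  have hanti : Antitone fun t => ν {x | t < g x} := fun t₁ t₂ h =>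
    measure_mono fun x hx => lt_of_le_of_lt h hx
  rw [layer μ, layer ν]
  calc ∫⁻ t in Set.Ioi 0, μ {x | t < g x}
      ≤ ∫⁻ t in Set.Ioi 0, (c * ν {x | t < g x} + (Set.Iio 1).indicator (fun _ => d) t) :=
        lintegral_mono hsuper
    _ = c * (∫⁻ t in Set.Ioi 0, ν {x | t < g x}) + d := by
        rw [lintegral_add_right _ (measurable_const.indicator measurableSet_Iio),
          lintegral_const_mul _ hanti.measurable, lintegral_indicator_const measurableSet_Iio,
          Measure.restrict_apply measurableSet_Iio, Set.Iio_inter_Ioi, Real.volume_Ioo]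
        simp

theorem DPDominated.rfl {μ : Measure α} : DPDominated 1 0 μ μ :=
  fun s _ => by rw [one_mul, add_zero]

theorem DPDominated.mono {c c' d d' : ℝ≥0∞} {μ ν : Measure α} (h : DPDominated c d μ ν)
    (hc : c ≤ c') (hd : d ≤ d') : DPDominated c' d' μ ν :=
  fun s hs => (h s hs).trans (by gcongr)

theorem dpDominated_bool_of_singleton {c d : ℝ≥0∞} {μ ν : Measure Bool} [IsProbabilityMeasure μ]
    [IsProbabilityMeasure ν] (hc : 1 ≤ c) (h : ∀ b, μ {b} ≤ c * ν {b} + d) :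
    DPDominated c d μ ν := by
  intro s _
  by_cases ht : true ∈ s <;> by_cases hf : false ∈ s
  · obtain rfl : s = Set.univ := by ext b; cases b <;> simp [ht, hf]
    rw [measure_univ, measure_univ, mul_one]
    exact le_add_right hc
  · obtain rfl : s = {true} := by ext b; cases b <;> simp [ht, hf]
    exact h true
  · obtain rfl : s = {false} := by ext b; cases b <;> simp [ht, hf]
    exact h false
  · obtain rfl : s = ∅ := by ext b; cases b <;> simp [ht, hf]
    simp

section Product

variable {ι : Type*} [DecidableEq ι] {X : ι → Type*} [∀ i, MeasurableSpace (X i)]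
  {μ ν : ∀ i, Measure (X i)} {f : (∀ i, X i) → ℝ≥0∞}

theorem lmarginal_le_one [∀ i, IsProbabilityMeasure (μ i)] (hf1 : ∀ x, f x ≤ 1)
    (s : Finset ι) (x : ∀ i, X i) : (∫⋯∫⁻_s, f ∂μ) x ≤ 1 :=
  (lintegral_mono fun _ => hf1 _).trans_eq (by simp)

/-- Truncating at `1` keeps the integrand of the next coordinate a `[0, 1]`-valued test function,
so the `d i` add up instead of being multiplied by the later `c i`. -/
theorem lmarginal_le_of_dpDominated [∀ i, IsProbabilityMeasure (μ i)]
    [∀ i, IsProbabilityMeasure (ν i)] {c d : ι → ℝ≥0∞}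
    (h : ∀ i, DPDominated (c i) (d i) (μ i) (ν i)) (hf : Measurable f) (hf1 : ∀ x, f x ≤ 1)
    (s : Finset ι) (x : ∀ i, X i) :
    (∫⋯∫⁻_s, f ∂μ) x ≤ min 1 ((∏ i ∈ s, c i) * (∫⋯∫⁻_s, f ∂ν) x) + ∑ i ∈ s, d i := by
  induction s using Finset.induction_on generalizing x with
  | empty => simp [hf1 x]
  | insert i s hi ih =>
    set C := ∏ j ∈ s, c j
    set D := ∑ j ∈ s, d j
    have hν : Measurable fun y => (∫⋯∫⁻_s, f ∂ν) (Function.update x i y) :=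
      (hf.lmarginal ν).comp (measurable_update x)
    set r : X i → ℝ≥0∞ := fun y => min 1 (C * (∫⋯∫⁻_s, f ∂ν) (Function.update x i y))
    have hr : Measurable r := measurable_const.min (hν.const_mul C)
    have hbound : (∫⋯∫⁻_insert i s, f ∂μ) x
        ≤ (c i * C) * (∫⋯∫⁻_insert i s, f ∂ν) x + (d i + D) := calc
      (∫⋯∫⁻_insert i s, f ∂μ) x = ∫⁻ y, (∫⋯∫⁻_s, f ∂μ) (Function.update x i y) ∂μ i :=
        lmarginal_insert _ hf hi x
      _ ≤ ∫⁻ y, (r y + D) ∂μ i := lintegral_mono fun y => ih _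
      _ = ∫⁻ y, r y ∂μ i + D := by rw [lintegral_add_right _ measurable_const]; simp
      _ ≤ c i * ∫⁻ y, r y ∂ν i + d i + D := by
        gcongr; exact (h i).lintegral_le hr fun y => min_le_left _ _
      _ ≤ c i * ∫⁻ y, C * (∫⋯∫⁻_s, f ∂ν) (Function.update x i y) ∂ν i + d i + D := by
        gcongr with y; exact min_le_right _ _
      _ = (c i * C) * (∫⋯∫⁻_insert i s, f ∂ν) x + (d i + D) := by
        rw [lintegral_const_mul _ hν, lmarginal_insert _ hf hi x]; ring
    rw [prod_insert hi, sum_insert hi, ← min_add_add_right]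
    exact le_min ((lmarginal_le_one hf1 _ x).trans le_self_add) hbound

theorem DPDominated.pi [Fintype ι] [∀ i, IsProbabilityMeasure (μ i)]
    [∀ i, IsProbabilityMeasure (ν i)] {c d : ι → ℝ≥0∞}
    (h : ∀ i, DPDominated (c i) (d i) (μ i) (ν i)) :
    DPDominated (∏ i, c i) (∑ i, d i) (Measure.pi μ) (Measure.pi ν) := by
  intro T hT
  have x : ∀ i, X i := fun i => (nonempty_of_isProbabilityMeasure (μ i)).some
  have hT1 : ∀ y, T.indicator 1 y ≤ (1 : ℝ≥0∞) := fun y => Set.indicator_le_self' (by simp) y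
  calc Measure.pi μ T = (∫⋯∫⁻_univ, T.indicator 1 ∂μ) x := by
        rw [← lintegral_eq_lmarginal_univ, lintegral_indicator_one hT]
    _ ≤ min 1 ((∏ i, c i) * (∫⋯∫⁻_univ, T.indicator 1 ∂ν) x) + ∑ i, d i :=
        lmarginal_le_of_dpDominated h (measurable_one.indicator hT) hT1 univ x
    _ ≤ (∏ i, c i) * Measure.pi ν T + ∑ i, d i := by
        rw [← lintegral_eq_lmarginal_univ, lintegral_indicator_one hT]
        gcongr; exact min_le_right _ _

end Product

end MeasureTheory

section KeyCount

variable {U κ : Type*} [DecidableEq κ] {f : U → Finset κ} {D : Finset U} {u : U} {k : κ}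

theorem keyCount_insert_of_mem [DecidableEq U] (hu : u ∉ D) (hk : k ∈ f u) :
    keyCount f (insert u D) k = keyCount f D k + 1 := by
  rw [keyCount, filter_insert, if_pos hk, card_insert_of_notMem fun h => hu (mem_filter.1 h).1]
  rfl

theorem keyCount_insert_of_notMem [DecidableEq U] (hk : k ∉ f u) :
    keyCount f (insert u D) k = keyCount f D k := by
  rw [keyCount, filter_insert, if_neg hk]
  rfl

end KeyCount

theorem key_selection_stability_and_privacy_general
    {U κ : Type*} [DecidableEq U] [DecidableEq κ] [Fintype κ]
    (L : ℕ) (f : U → Finset κ) (hf : ∀ u, (f u).card ≤ L)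
    (R : ℕ → ProbabilityMeasure Bool) (ε₀ δ₀ : ℝ) (hε₀ : 0 ≤ ε₀)
    (hR : ∀ a a' : ℕ, a ≤ a' + 1 → a' ≤ a + 1 → ∀ o : Bool,
      (R a : Measure Bool) {o}
        ≤ ENNReal.ofReal (Real.exp ε₀) * (R a' : Measure Bool) {o} + ENNReal.ofReal δ₀)
    (D : Finset U) (u : U) (hu : u ∉ D) :
    ({k : κ | (0 < keyCount f D k) ≠ (0 < keyCount f (insert u D) k)} ⊆ ↑(f u)) ∧
    (∀ T : Set (κ → Bool), MeasurableSet T →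
      Measure.pi (fun k => (R (keyCount f D k) : Measure Bool)) T
        ≤ ENNReal.ofReal (Real.exp (L * ε₀))
            * Measure.pi (fun k => (R (keyCount f (insert u D) k) : Measure Bool)) T
          + ENNReal.ofReal (L * δ₀)) := by
  refine ⟨fun k hk => ?_, fun T hT => ?_⟩
  · by_contra hku
    exact hk (by rw [keyCount_insert_of_notMem hku])
  set c := ENNReal.ofReal (Real.exp ε₀)
  set d := ENNReal.ofReal δ₀
  have hkey : ∀ k, DPDominated (if k ∈ f u then c else 1) (if k ∈ f u then d else 0)
      (R (keyCount f D k) : Measure Bool) (R (keyCount f (insert u D) k)) := by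
    intro k
    split_ifs with hk
    · rw [keyCount_insert_of_mem hu hk]
      exact dpDominated_bool_of_singleton (ENNReal.one_le_ofReal.2 (Real.one_le_exp hε₀))
        (hR _ _ (by omega) (by omega))
    · rw [keyCount_insert_of_notMem hk]
      exact DPDominated.rfl
  refine (DPDominated.pi hkey).mono ?_ ?_ T hT
  · rw [prod_ite_mem, univ_inter, prod_const, ← ENNReal.ofReal_pow (Real.exp_nonneg _),
      ← Real.exp_nat_mul]
    gcongr
    exact hf u
  · rw [sum_ite_mem, univ_inter, sum_const, nsmul_eq_mul, ENNReal.ofReal_mul (Nat.cast_nonneg L),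
      ENNReal.ofReal_natCast]
    gcongr
    exact hf u

theorem key_selection_stability_and_privacy
    {U κ : Type*} [DecidableEq U] [DecidableEq κ] [Fintype κ]
    (L : ℕ) (f : U → Finset κ) (hf : ∀ u, (f u).card ≤ L)
    (R : ℕ → ProbabilityMeasure Bool) (ε₀ δ₀ : ℝ) (hε₀ : 0 ≤ ε₀) (hδ₀ : 0 ≤ δ₀)
    (hR0 : (R 0 : Measure Bool) {true} = 0)
    (hR : ∀ a a' : ℕ, a ≤ a' + 1 → a' ≤ a + 1 → ∀ o : Bool,
      (R a : Measure Bool) {o}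
        ≤ ENNReal.ofReal (Real.exp ε₀) * (R a' : Measure Bool) {o} + ENNReal.ofReal δ₀)
    (D : Finset U) (u : U) (hu : u ∉ D) :
    ({k : κ | (0 < keyCount f D k) ≠ (0 < keyCount f (insert u D) k)} ⊆ ↑(f u)) ∧
    (∀ T : Set (κ → Bool), MeasurableSet T →
      Measure.pi (fun k => (R (keyCount f D k) : Measure Bool)) T
        ≤ ENNReal.ofReal (Real.exp (L * ε₀))
            * Measure.pi (fun k => (R (keyCount f (insert u D) k) : Measure Bool)) T
          + ENNReal.ofReal (L * δ₀)) :=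
  key_selection_stability_and_privacy_general L f hf R ε₀ δ₀ hε₀ hR D u hu
end
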